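/- arXiv:1506.09197 — 4 statements merged into one kernel-verified Lean document; each statement's English description precedes it below -/
import Mathlib

section
/- Let δ : ℝ → ℝ be continuous, let t > 0 and λ > 0, and define v : [0, t] → ℝ by v(s) = exp( e^s ( ∫_s^t e^{-u} δ(u) du + e^{-t} · log λ ) ). Then v(t) = λ, v(s) > 0 for all s ∈ [0, t], and v satisfies the backward differential equation v'(s) = v(s) · log( e^{-δ(s)} · v(s) ) = v(s) · ( log v(s) − δ(s) ) for every s ∈ [0, t]. -/
open MeasureTheory Real

/-! Writing `v = exp ∘ G` with `G s = e^s (∫_s^t e^{-u} δ u du + c)`, the product rule and the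
fundamental theorem of calculus give the linear equation `G' = G - δ`; since `log v = G`, this
is `v' = v (log v - δ)`. At `s = t` the integral vanishes and `G t = log λ`. -/

theorem hasDerivAt_integral_left_of_continuous {f : ℝ → ℝ} (hf : Continuous f) (s t : ℝ) :
    HasDerivAt (fun s => ∫ u in s..t, f u) (-f s) s :=
  intervalIntegral.integral_hasDerivAt_left (hf.intervalIntegrable s t)
    (hf.stronglyMeasurableAtFilter _ _) hf.continuousAt

theorem hasDerivAt_exp_mul_integral_exp_neg_mul {δ : ℝ → ℝ} (hδ : Continuous δ) (t c s : ℝ) :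
    HasDerivAt (fun s => exp s * ((∫ u in s..t, exp (-u) * δ u) + c))
      (exp s * ((∫ u in s..t, exp (-u) * δ u) + c) - δ s) s := by
  have hf : Continuous fun u => exp (-u) * δ u := (continuous_exp.comp continuous_neg).mul hδ
  have hcancel : exp s * (exp (-s) * δ s) = δ s := by
    rw [← mul_assoc, ← exp_add, add_neg_cancel, exp_zero, one_mul]
  refine ((hasDerivAt_exp s).mul
    ((hasDerivAt_integral_left_of_continuous hf s t).add_const c)).congr_deriv ?_
  rw [mul_neg, hcancel, sub_eq_add_neg]

theorem log_exp_mul {x : ℝ} (hx : 0 < x) (a : ℝ) : log (exp a * x) = log x + a := by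
  rw [log_mul (exp_ne_zero a) hx.ne', log_exp, add_comm]

theorem neveu_backward_solution_general
    (δ : ℝ → ℝ) (hδ : Continuous δ) (t lam : ℝ) (hlam : 0 < lam)
    (v : ℝ → ℝ)
    (hv : ∀ s : ℝ, v s = Real.exp (Real.exp s *
      ((∫ u in s..t, Real.exp (-u) * δ u) + Real.exp (-t) * Real.log lam))) :
    v t = lam ∧
    (∀ s ∈ Set.Icc (0:ℝ) t, 0 < v s) ∧
    (∀ s ∈ Set.Icc (0:ℝ) t,
      HasDerivAt v (v s * Real.log (Real.exp (-δ s) * v s)) s) ∧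
    (∀ s ∈ Set.Icc (0:ℝ) t,
      v s * Real.log (Real.exp (-δ s) * v s) = v s * (Real.log (v s) - δ s)) := by
  have hpos : ∀ s, 0 < v s := fun s => hv s ▸ exp_pos _
  have hlog_eq : ∀ s, v s * log (exp (-δ s) * v s) = v s * (log (v s) - δ s) := fun s => by
    rw [log_exp_mul (hpos s), sub_eq_add_neg]
  have hvt : v t = lam := by
    rw [hv, intervalIntegral.integral_same, zero_add, ← mul_assoc, ← exp_add, add_neg_cancel,
      exp_zero, one_mul, exp_log hlam]
  have hderiv : ∀ s, HasDerivAt v (v s * (log (v s) - δ s)) s := fun s => by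
    rw [funext hv]
    beta_reduce
    rw [log_exp]
    exact (hasDerivAt_exp_mul_integral_exp_neg_mul hδ t _ s).exp
  exact ⟨hvt, fun s _ => hpos s, fun s _ => hlog_eq s ▸ hderiv s, fun s _ => hlog_eq s⟩

/-- Explicit solution of the backward equation for the Neveu branching mechanism
`ψ(u) = u log u`: `v(s) = exp(e^s (∫_s^t e^{-u} δ(u) du + e^{-t} log λ))` satisfies
`v(t) = λ`, `v > 0` on `[0, t]`, and
`v'(s) = v(s) log(e^{-δ(s)} v(s)) = v(s) (log v(s) - δ(s))` on `[0, t]`. -/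
theorem neveu_backward_solution
    (δ : ℝ → ℝ) (hδ : Continuous δ) (t lam : ℝ) (ht : 0 < t) (hlam : 0 < lam)
    (v : ℝ → ℝ)
    (hv : ∀ s : ℝ, v s = Real.exp (Real.exp s *
      ((∫ u in s..t, Real.exp (-u) * δ u) + Real.exp (-t) * Real.log lam))) :
    v t = lam ∧
    (∀ s ∈ Set.Icc (0:ℝ) t, 0 < v s) ∧
    (∀ s ∈ Set.Icc (0:ℝ) t,
      HasDerivAt v (v s * Real.log (Real.exp (-δ s) * v s)) s) ∧
    (∀ s ∈ Set.Icc (0:ℝ) t,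
      v s * Real.log (Real.exp (-δ s) * v s) = v s * (Real.log (v s) - δ s)) :=
  neveu_backward_solution_general δ hδ t lam hlam v hv
end

section
/- Let β ∈ (−1, 0) ∪ (0, 1), let c_β be a real number with β · c_β > 0, let α ∈ ℝ, t > 0, λ > 0, and let δ : ℝ → ℝ be continuous. Define v : [0, t] → ℝ by v(s) = e^{-α s} ( (λ e^{α t})^{-β} + β c_β ∫_s^t e^{-β (δ(u) + α u)} du )^{-1/β}. Then v(t) = λ, v(s) > 0 for all s ∈ [0, t], and v satisfies the backward differential equation v'(s) = −α v(s) + c_β · v(s)^{β+1} · e^{-β δ(s)} for every s ∈ [0, t]. -/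
open MeasureTheory Real

/-!
Writing `v(s) = e^{-αs} F(s)^{-1/β}`, i.e. `F(s) = (e^{αs} v(s))^{-β}`, turns the Bernoulli
equation `v' = -α v + c v^{β+1} e^{-βδ}` into the linear one `F'(s) = -β c e^{-β(δ(s) + αs)}`,
whose solution with `F(t) = (λ e^{αt})^{-β}` is the integral in the formula. The condition
`β c > 0` keeps `F` positive for `s ≤ t`.
-/

section StableBackward

variable {α β c : ℝ}

lemma rpow_neg_rpow_neg_one_div {x : ℝ} (hx : 0 ≤ x) (hβ : β ≠ 0) :
    (x ^ (-β)) ^ (-1 / β) = x := by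
  rw [neg_div, one_div, ← inv_neg, rpow_rpow_inv hx (neg_ne_zero.mpr hβ)]

lemma exp_mul_rpow_pow_add_one_mul_exp {y s d : ℝ} (hy : 0 < y) (hβ : β ≠ 0) :
    (exp (-(α * s)) * y ^ (-1 / β)) ^ (β + 1) * exp (-(β * d)) =
      exp (-(α * s)) * y ^ (-1 / β - 1) * exp (-(β * (d + α * s))) := by
  have hexp : -1 / β * (β + 1) = -1 / β - 1 := by field_simp; ring
  have hexps : exp (-(α * s) * (β + 1)) * exp (-(β * d)) =
      exp (-(α * s)) * exp (-(β * (d + α * s))) := by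
    rw [← exp_add, ← exp_add]
    ring_nf
  rw [mul_rpow (exp_pos _).le (rpow_nonneg hy.le _), ← exp_mul, ← rpow_mul hy.le, hexp]
  linear_combination y ^ (-1 / β - 1) * hexps

lemma hasDerivAt_exp_mul_rpow_neg_one_div {F : ℝ → ℝ} {s d : ℝ} (hβ : β ≠ 0) (hFs : 0 < F s)
    (hF : HasDerivAt F (-(β * c * exp (-(β * (d + α * s))))) s) :
    HasDerivAt (fun x => exp (-(α * x)) * F x ^ (-1 / β))
      (-(α * (exp (-(α * s)) * F s ^ (-1 / β))) +
        c * (exp (-(α * s)) * F s ^ (-1 / β)) ^ (β + 1) * exp (-(β * d))) s := by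
  have hexp : HasDerivAt (fun x => exp (-(α * x))) (exp (-(α * s)) * -α) s := by
    simpa using ((hasDerivAt_id s).const_mul α).neg.exp
  refine (hexp.mul (hF.rpow_const (Or.inl hFs.ne'))).congr_deriv ?_
  rw [mul_assoc c, exp_mul_rpow_pow_add_one_mul_exp hFs hβ]
  field_simp

theorem Continuous.hasDerivAt_integral_left {f : ℝ → ℝ} (hf : Continuous f) (s t : ℝ) :
    HasDerivAt (fun x => ∫ u in x..t, f u) (-f s) s :=
  intervalIntegral.integral_hasDerivAt_left (hf.intervalIntegrable s t)
    (hf.stronglyMeasurableAtFilter _ _) hf.continuousAt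

end StableBackward

theorem stable_backward_solution_general
    (β c α t lam : ℝ)
    (hβ0 : β ≠ 0) (hβc : 0 < β * c)
    (hlam : 0 < lam)
    (δ : ℝ → ℝ) (hδ : Continuous δ)
    (v : ℝ → ℝ)
    (hv : ∀ s : ℝ, v s = Real.exp (-(α * s)) *
      ((lam * Real.exp (α * t)) ^ (-β) +
        β * c * ∫ u in s..t, Real.exp (-(β * (δ u + α * u)))) ^ (-1 / β)) :
    v t = lam ∧
    (∀ s ∈ Set.Icc (0:ℝ) t, 0 < v s) ∧
    (∀ s ∈ Set.Icc (0:ℝ) t,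
      HasDerivAt v (-(α * v s) + c * v s ^ (β + 1) * Real.exp (-(β * δ s))) s) := by
  set g : ℝ → ℝ := fun u => exp (-(β * (δ u + α * u)))
  set A := (lam * exp (α * t)) ^ (-β)
  set F : ℝ → ℝ := fun s => A + β * c * ∫ u in s..t, g u
  have hF_pos : ∀ s ≤ t, 0 < F s := fun s hs =>
    add_pos_of_pos_of_nonneg (by positivity)
      (mul_nonneg hβc.le (intervalIntegral.integral_nonneg hs fun u _ => (exp_pos _).le))
  have hF_deriv (s : ℝ) : HasDerivAt F (-(β * c * g s)) s := by
    rw [← mul_neg]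
    exact (((show Continuous g by fun_prop).hasDerivAt_integral_left s t).const_mul
      (β * c)).const_add A
  have hvF : v = fun s => exp (-(α * s)) * F s ^ (-1 / β) := funext hv
  refine ⟨?_, fun s hs => ?_, fun s hs => ?_⟩
  · rw [hv, intervalIntegral.integral_same, mul_zero, add_zero,
      rpow_neg_rpow_neg_one_div (by positivity) hβ0, ← mul_assoc, mul_right_comm, ← exp_add,
      neg_add_cancel, exp_zero, one_mul]
  · rw [hv]
    exact mul_pos (exp_pos _) (rpow_pos_of_pos (hF_pos s hs.2) _)
  · rw [hvF]
    exact hasDerivAt_exp_mul_rpow_neg_one_div hβ0 (hF_pos s hs.2) (hF_deriv s)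

/-- Explicit solution of the backward equation for the stable branching mechanism
`ψ(u) = -α u + c_β u^{β+1}` with `β ∈ (-1,0) ∪ (0,1)` and `β c_β > 0`:
`v(s) = e^{-αs} ((λ e^{αt})^{-β} + β c_β ∫_s^t e^{-β(δ(u)+αu)} du)^{-1/β}` satisfies
`v(t) = λ`, `v > 0` on `[0, t]`, and
`v'(s) = -α v(s) + c_β v(s)^{β+1} e^{-β δ(s)}` on `[0, t]`. -/
theorem stable_backward_solution
    (β c α t lam : ℝ)
    (hβ : β ∈ Set.Ioo (-1 : ℝ) 1) (hβ0 : β ≠ 0) (hβc : 0 < β * c)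
    (ht : 0 < t) (hlam : 0 < lam)
    (δ : ℝ → ℝ) (hδ : Continuous δ)
    (v : ℝ → ℝ)
    (hv : ∀ s : ℝ, v s = Real.exp (-(α * s)) *
      ((lam * Real.exp (α * t)) ^ (-β) +
        β * c * ∫ u in s..t, Real.exp (-(β * (δ u + α * u)))) ^ (-1 / β)) :
    v t = lam ∧
    (∀ s ∈ Set.Icc (0:ℝ) t, 0 < v s) ∧
    (∀ s ∈ Set.Icc (0:ℝ) t,
      HasDerivAt v (-(α * v s) + c * v s ^ (β + 1) * Real.exp (-(β * δ s))) s) :=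
  stable_backward_solution_general β c α t lam hβ0 hβc hlam δ hδ v hv
end

section
/- Let γ ≥ 0 and let μ be a Borel measure on (0, ∞) with ∫_{(0,∞)} (x ∧ x²) μ(dx) < ∞. Define ψ₀(λ) = γ² λ² + ∫_{(0,∞)} ( e^{-λ x} − 1 + λ x ) μ(dx) for λ > 0, and Φ(λ) = ψ₀(λ)/λ. Then for every λ > 0, ∫_0^∞ Φ(λ e^{-y}) dy = γ² λ + ∫_{(0,∞)} x · ( ∫_0^{λ x} (e^{-w} − 1 + w) w^{-2} dw ) μ(dx), and in particular, for every λ > 0, ∫_0^∞ Φ(λ e^{-y}) dy < ∞ if and only if ∫_{(1,∞)} x · log x μ(dx) < ∞. -/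
/-!
With `h(u) = e^{-u} - 1 + u` one has `Φ(s) = γ² s + ∫ h(s x) / s μ(dx)`. After Tonelli, the
substitution `w = λ x e^{-y}` turns `∫_0^∞ h(λ e^{-y} x) / (λ e^{-y}) dy` into
`x ∫_0^{λx} h(w) / w² dw`, which is the identity.

From `u - 1 ≤ h(u) ≤ min(u, u²)`, the primitive `F(u) = ∫_0^u h(w) / w² dw` satisfies `F(u) ≤ u`
and `|F(u) - log u| ≤ 1` for `u ≥ 1`. So `x F(λx)` is at most a multiple of `x ∧ x²` on bounded
sets and differs from `x log x` by `O(x)` for large `x`, and `x ∧ x²` is `μ`-integrable.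
-/

open MeasureTheory Real Set

lemma sq_le_mul_min {a x : ℝ} (hx : 0 ≤ x) (hxa : x ≤ a) (ha : 1 ≤ a) :
    x ^ 2 ≤ a * min x (x ^ 2) := by
  rcases le_total x 1 with hx1 | hx1
  · rw [min_eq_right (by nlinarith)]; nlinarith
  · rw [min_eq_left (by nlinarith)]; nlinarith

lemma intervalIntegrable_inv_sub_inv_sq {a b : ℝ} (ha : 0 < a) (hb : 0 < b) :
    IntervalIntegrable (fun w : ℝ => w⁻¹ - (w ^ 2)⁻¹) volume a b := by
  have hpos : ∀ w ∈ uIcc a b, 0 < w := fun w hw => (lt_min ha hb).trans_le hw.1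
  exact (intervalIntegral.intervalIntegrable_inv (fun w hw => (hpos w hw).ne') continuousOn_id).sub
    (intervalIntegral.intervalIntegrable_inv (fun w hw => (pow_pos (hpos w hw) 2).ne')
      (by fun_prop))

lemma integral_inv_sub_inv_sq {a b : ℝ} (ha : 0 < a) (hb : 0 < b) :
    ∫ w in a..b, (w⁻¹ - (w ^ 2)⁻¹) = log b + b⁻¹ - (log a + a⁻¹) := by
  have hpos : ∀ w ∈ uIcc a b, 0 < w := fun w hw => (lt_min ha hb).trans_le hw.1
  refine intervalIntegral.integral_eq_sub_of_hasDerivAt (f := fun w => log w + w⁻¹)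
    (fun w hw => ?_) (intervalIntegrable_inv_sub_inv_sq ha hb)
  rw [sub_eq_add_neg]
  exact (hasDerivAt_log (hpos w hw).ne').fun_add (hasDerivAt_inv (hpos w hw).ne')

lemma image_mul_exp_neg_Ioi {c : ℝ} (hc : 0 < c) :
    (fun y => c * exp (-y)) '' Ioi 0 = Ioo 0 c := by
  have : (fun y => c * exp (-y)) = (c * ·) ∘ exp ∘ Neg.neg := rfl
  rw [this, image_comp, image_comp, image_neg_Ioi, neg_zero, image_exp_Iio, exp_zero,
    image_mul_left_Ioo hc, mul_zero, mul_one]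

lemma lintegral_comp_mul_exp_neg {c : ℝ} (hc : 0 < c) (g : ℝ → ENNReal) :
    ∫⁻ y in Ioi 0, g (c * exp (-y)) = ∫⁻ w in Ioo 0 c, ENNReal.ofReal w⁻¹ * g w := by
  have hderiv : ∀ y ∈ Ioi (0 : ℝ),
      HasDerivWithinAt (fun y => c * exp (-y)) (-(c * exp (-y))) (Ioi 0) y := fun y _ => by
    simpa using ((hasDerivAt_neg y).exp.const_mul c).hasDerivWithinAt
  have hinj : InjOn (fun y => c * exp (-y)) (Ioi 0) := fun y _ z _ h => by
    simpa [hc.ne'] using h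
  rw [← image_mul_exp_neg_Ioi hc,
    lintegral_image_eq_lintegral_abs_deriv_mul measurableSet_Ioi hderiv hinj]
  refine setLIntegral_congr_fun measurableSet_Ioi fun y _ => ?_
  rw [← mul_assoc, ← ENNReal.ofReal_mul (abs_nonneg _), abs_neg,
    abs_of_pos (by positivity), mul_inv_cancel₀ (by positivity), ENNReal.ofReal_one, one_mul]

lemma lintegral_ofReal_exp_neg_Ioi : ∫⁻ y in Ioi 0, ENNReal.ofReal (exp (-y)) = 1 := by
  have hint : IntegrableOn (fun y : ℝ => exp (-y)) (Ioi 0) := by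
    simpa using exp_neg_integrableOn_Ioi 0 one_pos
  rw [← ENNReal.ofReal_one, ← integral_exp_neg_Ioi_zero,
    ofReal_integral_eq_lintegral_ofReal hint (ae_of_all _ fun y => (exp_pos _).le)]

lemma sFinite_of_lintegral_ne_top {α : Type*} [MeasurableSpace α] {μ : Measure α}
    {f : α → ENNReal} (hf : AEMeasurable f μ) (hf0 : ∀ᵐ x ∂μ, f x ≠ 0)
    (hfin : ∫⁻ x, f x ∂μ ≠ ⊤) : SFinite μ := by
  have : IsFiniteMeasure (μ.withDensity f) := isFiniteMeasure_withDensity hfin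
  rw [← withDensity_inv_same₀ hf hf0 ((ae_lt_top' hf hfin).mono fun _ => LT.lt.ne)]
  infer_instance

lemma lintegral_ofReal_lt_top_iff_of_abs_sub_le {α : Type*} [MeasurableSpace α]
    {μ : Measure α} {f g k : α → ℝ} (hk : AEMeasurable k μ)
    (hk_fin : ∫⁻ x, ENNReal.ofReal (k x) ∂μ < ⊤) (hfg : ∀ᵐ x ∂μ, |f x - g x| ≤ k x) :
    ∫⁻ x, ENNReal.ofReal (f x) ∂μ < ⊤ ↔ ∫⁻ x, ENNReal.ofReal (g x) ∂μ < ⊤ := by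
  have transfer : ∀ {f g : α → ℝ}, (∀ᵐ x ∂μ, f x ≤ g x + k x) →
      ∫⁻ x, ENNReal.ofReal (g x) ∂μ < ⊤ → ∫⁻ x, ENNReal.ofReal (f x) ∂μ < ⊤ := by
    intro f g hle hg
    calc ∫⁻ x, ENNReal.ofReal (f x) ∂μ
        ≤ ∫⁻ x, ENNReal.ofReal (g x) + ENNReal.ofReal (k x) ∂μ :=
          lintegral_mono_ae (hle.mono fun x hx => (ENNReal.ofReal_le_ofReal hx).trans
            ENNReal.ofReal_add_le)
      _ = ∫⁻ x, ENNReal.ofReal (g x) ∂μ + ∫⁻ x, ENNReal.ofReal (k x) ∂μ :=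
          lintegral_add_right' _ hk.ennreal_ofReal
      _ < ⊤ := ENNReal.add_lt_top.2 ⟨hg, hk_fin⟩
  exact ⟨transfer (hfg.mono fun x hx => by linarith [neg_abs_le (f x - g x)]),
    transfer (hfg.mono fun x hx => by linarith [le_abs_self (f x - g x)])⟩

noncomputable def expRemainder (u : ℝ) : ℝ := exp (-u) - 1 + u

@[fun_prop]
lemma continuous_expRemainder : Continuous expRemainder := by
  unfold expRemainder; fun_prop

lemma expRemainder_nonneg (u : ℝ) : 0 ≤ expRemainder u := by
  have := add_one_le_exp (-u)
  unfold expRemainder; linarith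

lemma sub_one_le_expRemainder (u : ℝ) : u - 1 ≤ expRemainder u := by
  have := exp_nonneg (-u)
  unfold expRemainder; linarith

lemma expRemainder_le_self {u : ℝ} (hu : 0 ≤ u) : expRemainder u ≤ u := by
  have := exp_le_one_iff.2 (neg_nonpos.2 hu)
  unfold expRemainder; linarith

lemma expRemainder_le_sq {u : ℝ} (hu : 0 ≤ u) : expRemainder u ≤ u ^ 2 := by
  rcases le_total u 1 with hu1 | hu1
  · have := (abs_le.1 (abs_exp_sub_one_sub_id_le (x := -u)
      (by rwa [abs_neg, abs_of_nonneg hu]))).2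
    unfold expRemainder; linarith
  · nlinarith [expRemainder_le_self hu]

lemma expRemainder_mul_le {s x : ℝ} (hs : 0 ≤ s) (hx : 0 ≤ x) :
    expRemainder (s * x) ≤ (s + s ^ 2) * min x (x ^ 2) := by
  rcases le_total x 1 with hx1 | hx1
  · rw [min_eq_right (by nlinarith)]
    nlinarith [expRemainder_le_sq (mul_nonneg hs hx)]
  · rw [min_eq_left (by nlinarith)]
    nlinarith [expRemainder_le_self (mul_nonneg hs hx)]

lemma expRemainder_div_sq_le_one {w : ℝ} (hw : 0 ≤ w) : expRemainder w / w ^ 2 ≤ 1 :=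
  div_le_one_of_le₀ (expRemainder_le_sq hw) (sq_nonneg w)

lemma intervalIntegrable_expRemainder_div_sq {a b : ℝ} (ha : 0 ≤ a) (hb : 0 ≤ b) :
    IntervalIntegrable (fun w => expRemainder w / w ^ 2) volume a b := by
  refine (intervalIntegrable_const (c := (1 : ℝ))).mono_fun
    (by fun_prop : Measurable fun w => expRemainder w / w ^ 2).aestronglyMeasurable
    ((ae_restrict_iff' measurableSet_uIoc).2 (ae_of_all _ fun w hw => ?_))
  have hw0 : 0 ≤ w := (le_min ha hb).trans (uIoc_subset_uIcc hw).1
  show ‖expRemainder w / w ^ 2‖ ≤ ‖(1 : ℝ)‖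
  rw [norm_of_nonneg (div_nonneg (expRemainder_nonneg w) (sq_nonneg w)), norm_one]
  exact expRemainder_div_sq_le_one hw0

noncomputable def expRemainderIntegral (u : ℝ) : ℝ := ∫ w in (0 : ℝ)..u, expRemainder w / w ^ 2

lemma expRemainderIntegral_nonneg {u : ℝ} (hu : 0 ≤ u) : 0 ≤ expRemainderIntegral u :=
  intervalIntegral.integral_nonneg hu fun w _ => div_nonneg (expRemainder_nonneg w) (sq_nonneg w)

lemma expRemainderIntegral_le_self {u : ℝ} (hu : 0 ≤ u) : expRemainderIntegral u ≤ u := by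
  simpa [expRemainderIntegral] using intervalIntegral.integral_mono_on hu
    (intervalIntegrable_expRemainder_div_sq le_rfl hu) intervalIntegrable_const fun w hw => expRemainder_div_sq_le_one hw.1

lemma abs_expRemainderIntegral_sub_log_le {u : ℝ} (hu : 1 ≤ u) :
    |expRemainderIntegral u - log u| ≤ 1 := by
  have hpos : ∀ w ∈ Icc 1 u, 0 < w := fun w hw => one_pos.trans_le hw.1
  have hint := intervalIntegrable_expRemainder_div_sq zero_le_one (zero_le_one.trans hu)
  have hsplit : expRemainderIntegral u =
      expRemainderIntegral 1 + ∫ w in (1 : ℝ)..u, expRemainder w / w ^ 2 :=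
    (intervalIntegral.integral_add_adjacent_intervals
      (intervalIntegrable_expRemainder_div_sq le_rfl zero_le_one) hint).symm
  have hupper : ∫ w in (1 : ℝ)..u, expRemainder w / w ^ 2 ≤ log u := by
    calc _ ≤ ∫ w in (1 : ℝ)..u, w⁻¹ := intervalIntegral.integral_mono_on hu hint
          (intervalIntegral.intervalIntegrable_inv
            (fun w hw => (one_pos.trans_le (uIcc_of_le hu ▸ hw).1).ne') continuousOn_id)
          fun w hw => by
            rw [div_le_iff₀ (pow_pos (hpos w hw) 2), inv_mul_eq_div, pow_two,
              mul_div_cancel_left₀ _ (hpos w hw).ne']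
            exact expRemainder_le_self (hpos w hw).le
      _ = log u := by simp [integral_inv_of_pos one_pos (one_pos.trans_le hu)]
  have hlower : log u + u⁻¹ - 1 ≤ ∫ w in (1 : ℝ)..u, expRemainder w / w ^ 2 := by
    have := integral_inv_sub_inv_sq one_pos (one_pos.trans_le hu)
    simp only [log_one, inv_one, zero_add] at this
    rw [← this]
    refine intervalIntegral.integral_mono_on hu
      (intervalIntegrable_inv_sub_inv_sq one_pos (one_pos.trans_le hu)) hint fun w hw => ?_
    rw [le_div_iff₀ (pow_pos (hpos w hw) 2)]
    have hw := (hpos w hw).ne'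
    field_simp
    linarith [sub_one_le_expRemainder w]
  have hF1_nonneg := expRemainderIntegral_nonneg zero_le_one
  have hF1_le := expRemainderIntegral_le_self zero_le_one
  have hu_inv : 0 ≤ u⁻¹ := by positivity
  rw [abs_le]
  constructor <;> linarith

lemma abs_mul_expRemainderIntegral_sub_mul_log_le {l x : ℝ} (hl : 0 < l) (hlx : 1 ≤ l * x) :
    |x * expRemainderIntegral (l * x) - x * log x| ≤ (1 + |log l|) * x := by
  have hx : 0 < x := pos_of_mul_pos_right (one_pos.trans_le hlx) hl.le
  rw [← mul_sub, abs_mul, abs_of_pos hx, mul_comm x]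
  refine mul_le_mul_of_nonneg_right ?_ hx.le
  calc |expRemainderIntegral (l * x) - log x|
      = |(expRemainderIntegral (l * x) - log (l * x)) + log l| := by
        rw [log_mul hl.ne' hx.ne']; ring_nf
    _ ≤ |expRemainderIntegral (l * x) - log (l * x)| + |log l| := abs_add_le _ _
    _ ≤ 1 + |log l| := by gcongr; exact abs_expRemainderIntegral_sub_log_le hlx

lemma ofReal_expRemainderIntegral {u : ℝ} (hu : 0 ≤ u) :
    ENNReal.ofReal (expRemainderIntegral u) =
      ∫⁻ w in Ioo 0 u, ENNReal.ofReal (expRemainder w / w ^ 2) := by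
  rw [expRemainderIntegral, intervalIntegral.integral_of_le hu, integral_Ioc_eq_integral_Ioo]
  exact ofReal_integral_eq_lintegral_ofReal
    (((intervalIntegrable_iff_integrableOn_Ioc_of_le hu).1
      (intervalIntegrable_expRemainder_div_sq le_rfl hu)).mono_set Ioo_subset_Ioc_self)
    (ae_of_all _ fun w => div_nonneg (expRemainder_nonneg w) (sq_nonneg w))

lemma lintegral_expRemainder_div_comp_mul_exp_neg {l x : ℝ} (hl : 0 < l) (hx : 0 < x) :
    ∫⁻ y in Ioi 0, ENNReal.ofReal (expRemainder (l * exp (-y) * x) / (l * exp (-y))) =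
      ENNReal.ofReal (x * expRemainderIntegral (l * x)) := by
  have hrw : ∀ y, expRemainder (l * exp (-y) * x) / (l * exp (-y)) =
      (fun w => x * (expRemainder w / w)) (l * x * exp (-y)) := fun y => by
    rw [mul_right_comm l]
    field_simp
  simp_rw [hrw]
  rw [lintegral_comp_mul_exp_neg (g := fun w => ENNReal.ofReal (x * (expRemainder w / w)))
    (by positivity), ENNReal.ofReal_mul hx.le, ofReal_expRemainderIntegral (by positivity),
    ← lintegral_const_mul' _ _ ENNReal.ofReal_ne_top]
  refine setLIntegral_congr_fun measurableSet_Ioo fun w hw => ?_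
  rw [← ENNReal.ofReal_mul (inv_nonneg.2 hw.1.le), ← ENNReal.ofReal_mul hx.le]
  congr 1
  field_simp

noncomputable def branchingMechanism (γ : ℝ) (μ : Measure ℝ) (s : ℝ) : ℝ :=
  γ ^ 2 * s ^ 2 + ∫ x in Ioi 0, expRemainder (s * x) ∂μ

section LevyMeasure

variable {μ : Measure ℝ}

lemma setLIntegral_ofReal_lt_top_of_le_mul_min
    (hμ : ∫⁻ x in Ioi 0, ENNReal.ofReal (min x (x ^ 2)) ∂μ < ⊤) {s : Set ℝ}
    (hs : MeasurableSet s) (hs0 : s ⊆ Ioi 0) {f : ℝ → ℝ} {C : ℝ}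
    (hf : ∀ x ∈ s, f x ≤ C * min x (x ^ 2)) :
    ∫⁻ x in s, ENNReal.ofReal (f x) ∂μ < ⊤ :=
  calc ∫⁻ x in s, ENNReal.ofReal (f x) ∂μ
      ≤ ∫⁻ x in s, ENNReal.ofReal C * ENNReal.ofReal (min x (x ^ 2)) ∂μ :=
        setLIntegral_mono' hs fun x hx => (ENNReal.ofReal_le_ofReal (hf x hx)).trans_eq
          (ENNReal.ofReal_mul' (le_min (hs0 hx).le (sq_nonneg x)))
    _ ≤ ENNReal.ofReal C * ∫⁻ x in Ioi 0, ENNReal.ofReal (min x (x ^ 2)) ∂μ := by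
        rw [lintegral_const_mul' _ _ ENNReal.ofReal_ne_top]
        gcongr
    _ < ⊤ := ENNReal.mul_lt_top ENNReal.ofReal_lt_top hμ

lemma sFinite_restrict_Ioi
    (hμ : ∫⁻ x in Ioi 0, ENNReal.ofReal (min x (x ^ 2)) ∂μ < ⊤) :
    SFinite (μ.restrict (Ioi 0)) :=
  sFinite_of_lintegral_ne_top (by fun_prop)
    ((ae_restrict_iff' measurableSet_Ioi).2 (ae_of_all _ fun x (hx : 0 < x) =>
      (ENNReal.ofReal_pos.2 (lt_min hx (by positivity))).ne')) hμ.ne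

lemma integrableOn_expRemainder_mul
    (hμ : ∫⁻ x in Ioi 0, ENNReal.ofReal (min x (x ^ 2)) ∂μ < ⊤) {s : ℝ} (hs : 0 ≤ s) :
    IntegrableOn (fun x => expRemainder (s * x)) (Ioi 0) μ :=
  ⟨(by fun_prop : Continuous fun x => expRemainder (s * x)).aestronglyMeasurable,
    (hasFiniteIntegral_iff_ofReal (ae_of_all _ fun x => expRemainder_nonneg _)).2
      (setLIntegral_ofReal_lt_top_of_le_mul_min hμ measurableSet_Ioi subset_rfl
        fun x hx => expRemainder_mul_le hs (le_of_lt hx))⟩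

lemma ofReal_branchingMechanism_div
    (hμ : ∫⁻ x in Ioi 0, ENNReal.ofReal (min x (x ^ 2)) ∂μ < ⊤) (γ : ℝ) {s : ℝ} (hs : 0 < s) :
    ENNReal.ofReal (branchingMechanism γ μ s / s) = ENNReal.ofReal (γ ^ 2 * s) +
      ∫⁻ x in Ioi 0, ENNReal.ofReal (expRemainder (s * x) / s) ∂μ := by
  have hnonneg : ∀ x, 0 ≤ expRemainder (s * x) / s := fun x =>
    div_nonneg (expRemainder_nonneg _) hs.le
  rw [branchingMechanism, add_div, ← integral_div, ENNReal.ofReal_add (by positivity)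
      (integral_nonneg hnonneg), ofReal_integral_eq_lintegral_ofReal
      ((integrableOn_expRemainder_mul hμ hs.le).div_const s) (ae_of_all _ hnonneg)]
  congr 2
  field_simp

lemma lintegral_branchingMechanism_div
    (hμ : ∫⁻ x in Ioi 0, ENNReal.ofReal (min x (x ^ 2)) ∂μ < ⊤) (γ : ℝ) {l : ℝ} (hl : 0 < l) :
    ∫⁻ y in Ioi 0, ENNReal.ofReal
        (branchingMechanism γ μ (l * exp (-y)) / (l * exp (-y))) =
      ENNReal.ofReal (γ ^ 2 * l) +
        ∫⁻ x in Ioi 0, ENNReal.ofReal (x * expRemainderIntegral (l * x)) ∂μ := by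
  have := sFinite_restrict_Ioi hμ
  have hmeas : Measurable (Function.uncurry fun y x =>
      ENNReal.ofReal (expRemainder (l * exp (-y) * x) / (l * exp (-y)))) := by
    fun_prop
  calc _ = ∫⁻ y in Ioi 0, ENNReal.ofReal (γ ^ 2 * l) * ENNReal.ofReal (exp (-y)) +
        ∫⁻ x in Ioi 0, ENNReal.ofReal (expRemainder (l * exp (-y) * x) / (l * exp (-y))) ∂μ :=
        setLIntegral_congr_fun measurableSet_Ioi fun y _ => by
          rw [ofReal_branchingMechanism_div hμ γ (by positivity),
            ← ENNReal.ofReal_mul (by positivity), mul_assoc]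
    _ = (ENNReal.ofReal (γ ^ 2 * l) * ∫⁻ y in Ioi 0, ENNReal.ofReal (exp (-y))) +
        ∫⁻ x in Ioi 0, (∫⁻ y in Ioi 0,
          ENNReal.ofReal (expRemainder (l * exp (-y) * x) / (l * exp (-y)))) ∂μ := by
        rw [lintegral_add_left (by fun_prop), lintegral_const_mul _ (by fun_prop),
          lintegral_lintegral_swap hmeas.aemeasurable]
    _ = _ := by
        rw [lintegral_ofReal_exp_neg_Ioi, mul_one]
        congr 1
        exact setLIntegral_congr_fun measurableSet_Ioi fun x (hx : 0 < x) =>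
          lintegral_expRemainder_div_comp_mul_exp_neg hl hx

lemma lintegral_mul_expRemainderIntegral_lt_top_iff
    (hμ : ∫⁻ x in Ioi 0, ENNReal.ofReal (min x (x ^ 2)) ∂μ < ⊤) {l : ℝ} (hl : 0 < l) :
    ∫⁻ x in Ioi 0, ENNReal.ofReal (x * expRemainderIntegral (l * x)) ∂μ < ⊤ ↔
      ∫⁻ x in Ioi 1, ENNReal.ofReal (x * log x) ∂μ < ⊤ := by
  -- Beyond `a` one has `l * x ≥ 1`, where `expRemainderIntegral` is `log` up to `1`.
  set a := max 1 l⁻¹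
  have ha : 1 ≤ a := le_max_left _ _
  have hsmall_F : ∫⁻ x in Ioc 0 a, ENNReal.ofReal (x * expRemainderIntegral (l * x)) ∂μ < ⊤ :=
    setLIntegral_ofReal_lt_top_of_le_mul_min hμ measurableSet_Ioc Ioc_subset_Ioi_self
      (C := l * a) fun x hx =>
        calc x * expRemainderIntegral (l * x) ≤ x * (l * x) := mul_le_mul_of_nonneg_left
              (expRemainderIntegral_le_self (mul_nonneg hl.le hx.1.le)) hx.1.le
          _ = l * x ^ 2 := by ring
          _ ≤ l * (a * min x (x ^ 2)) := by gcongr; exact sq_le_mul_min hx.1.le hx.2 ha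
          _ = l * a * min x (x ^ 2) := by ring
  have hsmall_log : ∫⁻ x in Ioc 1 a, ENNReal.ofReal (x * log x) ∂μ < ⊤ :=
    setLIntegral_ofReal_lt_top_of_le_mul_min hμ measurableSet_Ioc
      (Ioc_subset_Ioi_self.trans (Ioi_subset_Ioi zero_le_one)) (C := a) fun x hx => by
        have hx0 : 0 < x := zero_lt_one.trans hx.1
        have := log_le_sub_one_of_pos hx0
        nlinarith [sq_le_mul_min hx0.le hx.2 ha]
  have hlarge : ∫⁻ x in Ioi a, ENNReal.ofReal (x * expRemainderIntegral (l * x)) ∂μ < ⊤ ↔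
      ∫⁻ x in Ioi a, ENNReal.ofReal (x * log x) ∂μ < ⊤ :=
    lintegral_ofReal_lt_top_iff_of_abs_sub_le (k := fun x => (1 + |log l|) * x) (by fun_prop)
      (setLIntegral_ofReal_lt_top_of_le_mul_min hμ measurableSet_Ioi
        (Ioi_subset_Ioi (zero_le_one.trans ha)) fun x hx => by
          rw [min_eq_left (by nlinarith [ha.trans_lt hx])])
      ((ae_restrict_iff' measurableSet_Ioi).2 (ae_of_all _ fun x hx =>
        abs_mul_expRemainderIntegral_sub_mul_log_le hl
          ((inv_le_iff_one_le_mul₀' hl).1 ((le_max_right _ _).trans (le_of_lt hx)))))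
  rw [← Ioc_union_Ioi_eq_Ioi (zero_le_one.trans ha), ← Ioc_union_Ioi_eq_Ioi ha,
    lintegral_union measurableSet_Ioi (Ioc_disjoint_Ioi le_rfl),
    lintegral_union measurableSet_Ioi (Ioc_disjoint_Ioi le_rfl), ENNReal.add_lt_top,
    ENNReal.add_lt_top]
  simp only [hsmall_F, hsmall_log, true_and, hlarge]

end LevyMeasure

theorem Phi_integral_identity_and_xlogx_criterion_general
    (γ : ℝ) (μ : Measure ℝ)
    (hμ : ∫⁻ x in Set.Ioi (0:ℝ), ENNReal.ofReal (min x (x ^ 2)) ∂μ < ⊤)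
    (ψ₀ Φ : ℝ → ℝ)
    (hψ : ∀ l : ℝ, 0 < l → ψ₀ l = γ ^ 2 * l ^ 2 +
      ∫ x in Set.Ioi (0:ℝ), (Real.exp (-(l * x)) - 1 + l * x) ∂μ)
    (hΦ : ∀ l : ℝ, 0 < l → Φ l = ψ₀ l / l) :
    ∀ l : ℝ, 0 < l →
      ((∫⁻ y in Set.Ioi (0:ℝ), ENNReal.ofReal (Φ (l * Real.exp (-y)))) =
        ENNReal.ofReal (γ ^ 2 * l) +
          ∫⁻ x in Set.Ioi (0:ℝ),
            ENNReal.ofReal (x * ∫ w in (0:ℝ)..(l * x),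
              (Real.exp (-w) - 1 + w) / w ^ 2) ∂μ) ∧
      ((∫⁻ y in Set.Ioi (0:ℝ), ENNReal.ofReal (Φ (l * Real.exp (-y)))) < ⊤ ↔
        ∫⁻ x in Set.Ioi (1:ℝ), ENNReal.ofReal (x * Real.log x) ∂μ < ⊤) := by
  intro l hl
  have hΦ_eq : ∀ y, Φ (l * exp (-y)) =
      branchingMechanism γ μ (l * exp (-y)) / (l * exp (-y)) := fun y => by
    have hs : 0 < l * exp (-y) := by positivity
    rw [hΦ _ hs, hψ _ hs]
    rfl
  have hidentity : ∫⁻ y in Ioi 0, ENNReal.ofReal (Φ (l * exp (-y))) =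
      ENNReal.ofReal (γ ^ 2 * l) +
        ∫⁻ x in Ioi 0, ENNReal.ofReal (x * expRemainderIntegral (l * x)) ∂μ := by
    simp_rw [hΦ_eq]
    exact lintegral_branchingMechanism_div hμ γ hl
  refine ⟨hidentity, ?_⟩
  rw [hidentity, ENNReal.add_lt_top, and_iff_right ENNReal.ofReal_lt_top]
  exact lintegral_mul_expRemainderIntegral_lt_top_iff hμ hl

/-- For the critical branching mechanism
`ψ₀(λ) = γ² λ² + ∫_{(0,∞)} (e^{-λx} - 1 + λx) μ(dx)` with
`∫ (x ∧ x²) μ(dx) < ∞` and `Φ(λ) = ψ₀(λ)/λ`, one has for every `λ > 0` the identity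
`∫_0^∞ Φ(λ e^{-y}) dy = γ² λ + ∫_{(0,∞)} x (∫_0^{λx} (e^{-w} - 1 + w) w^{-2} dw) μ(dx)`,
and `∫_0^∞ Φ(λ e^{-y}) dy < ∞` if and only if `∫_{(1,∞)} x log x μ(dx) < ∞`. -/
theorem Phi_integral_identity_and_xlogx_criterion
    (γ : ℝ) (hγ : 0 ≤ γ) (μ : Measure ℝ)
    (hμ : ∫⁻ x in Set.Ioi (0:ℝ), ENNReal.ofReal (min x (x ^ 2)) ∂μ < ⊤)
    (ψ₀ Φ : ℝ → ℝ)
    (hψ : ∀ l : ℝ, 0 < l → ψ₀ l = γ ^ 2 * l ^ 2 +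
      ∫ x in Set.Ioi (0:ℝ), (Real.exp (-(l * x)) - 1 + l * x) ∂μ)
    (hΦ : ∀ l : ℝ, 0 < l → Φ l = ψ₀ l / l) :
    ∀ l : ℝ, 0 < l →
      ((∫⁻ y in Set.Ioi (0:ℝ), ENNReal.ofReal (Φ (l * Real.exp (-y)))) =
        ENNReal.ofReal (γ ^ 2 * l) +
          ∫⁻ x in Set.Ioi (0:ℝ),
            ENNReal.ofReal (x * ∫ w in (0:ℝ)..(l * x),
              (Real.exp (-w) - 1 + w) / w ^ 2) ∂μ) ∧
      ((∫⁻ y in Set.Ioi (0:ℝ), ENNReal.ofReal (Φ (l * Real.exp (-y)))) < ⊤ ↔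
        ∫⁻ x in Set.Ioi (1:ℝ), ENNReal.ofReal (x * Real.log x) ∂μ < ⊤) :=
  Phi_integral_identity_and_xlogx_criterion_general γ μ hμ ψ₀ Φ hψ hΦ
end

section
/- Let B = (B_s)_{s ≥ 0} be a standard one-dimensional Brownian motion, let η ∈ ℝ and t > 0. Then the random variable ∫_0^t e^{2(η s + B_s)} ds has the same distribution as the random variable e^{2(η t + B_t)} · ∫_0^t e^{-2(η s + B_s)} ds. -/
open MeasureTheory ProbabilityTheory Filter Real

/-- A standard one-dimensional Brownian motion `B` on a probability space `(Ω, P)`: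
continuous paths, `B 0 = 0`, independent increments, and Gaussian increments
`B t - B s ~ N(0, t - s)` for `0 ≤ s ≤ t`. -/
structure IsStandardBrownianMotion {Ω : Type} [MeasurableSpace Ω]
    (P : Measure Ω) (B : ℝ → Ω → ℝ) : Prop where
  isProbability : IsProbabilityMeasure P
  measurable : ∀ t : ℝ, Measurable (B t)
  cont : ∀ᵐ ω ∂P, Continuous fun s => B s ω
  start : ∀ᵐ ω ∂P, B 0 ω = 0
  indepIncrements : ∀ (n : ℕ) (t : Fin (n + 1) → ℝ), Monotone t → (∀ i, 0 ≤ t i) →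
    iIndepFun
      (fun i : Fin n => fun ω => B (t i.succ) ω - B (t i.castSucc) ω) P
  gaussianIncrements : ∀ s t : ℝ, 0 ≤ s → s ≤ t →
    P.map (fun ω => B t ω - B s ω) = gaussianReal 0 (Real.toNNReal (t - s))

/-- The exponential functional `I_t^{(η)} = ∫_0^t exp(2(η s + B_s)) ds` of Brownian
motion with drift `η`. -/
noncomputable def expFunctional {Ω : Type} (B : ℝ → Ω → ℝ) (η t : ℝ) (ω : Ω) : ℝ :=
  ∫ s in (0:ℝ)..t, Real.exp (2 * (η * s + B s ω))

/-!
Pathwise, the substitution `s ↦ t - s` gives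
`∫_0^t e^{2(ηs + B_s)} ds = e^{2(ηt + W_t)} ∫_0^t e^{-2(ηs + W_s)} ds`
with `W_s = B_t - B_{t-s}`, so it suffices that `W` and `B` have the same law as paths on
`[0, t]`. Only Riemann sums on the uniform grid are needed: there the increments of `W` are those
of `B` in reverse order, and an i.i.d. vector is exchangeable. Almost sure convergence of the
Riemann sums then carries the identity in law over to the integrals.
-/

open Topology

section RiemannSum

open Finset

variable {E : Type*} [NormedAddCommGroup E] [NormedSpace ℝ E] [CompleteSpace E]
  {g : ℝ → E} {a b : ℝ}

theorem norm_sum_smul_sub_intervalIntegral_le (hab : a ≤ b) {n : ℕ} (hn : 0 < n)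
    (hg : ContinuousOn g (Set.Icc a b)) {ε : ℝ}
    (hε : ∀ x ∈ Set.Icc a b, ∀ y ∈ Set.Icc a b, dist x y ≤ (b - a) / n →
      ‖g x - g y‖ ≤ ε) :
    ‖∑ k ∈ range n, ((b - a) / n) • g (a + k * ((b - a) / n)) - ∫ x in a..b, g x‖ ≤
      ε * (b - a) := by
  set h := (b - a) / n with hh
  set u : ℕ → ℝ := fun k => a + k * h
  have hnR : (0 : ℝ) < n := Nat.cast_pos.mpr hn
  have hh0 : 0 ≤ h := div_nonneg (sub_nonneg.mpr hab) hnR.le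
  have hu_succ (k : ℕ) : u (k + 1) = u k + h := by simp only [u]; push_cast; ring
  have hun : u n = b := by simp only [u, hh]; field_simp; ring
  have hu_mem {k : ℕ} (hk : k ≤ n) : u k ∈ Set.Icc a b := by
    refine ⟨le_add_of_nonneg_right (by positivity), ?_⟩
    rw [← hun]
    exact add_le_add_right (mul_le_mul_of_nonneg_right (Nat.cast_le.mpr hk) hh0) a
  have hint {k : ℕ} (hk : k < n) : IntervalIntegrable g volume (u k) (u (k + 1)) :=
    (hg.mono (Set.uIcc_subset_Icc (hu_mem hk.le) (hu_mem hk))).intervalIntegrable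
  have hpiece {k : ℕ} (hk : k < n) :
      ‖h • g (u k) - ∫ x in u k..u (k + 1), g x‖ ≤ ε * h := by
    have hconst : h • g (u k) = ∫ _ in u k..u (k + 1), g (u k) := by
      rw [intervalIntegral.integral_const, hu_succ, add_sub_cancel_left]
    rw [hconst, ← intervalIntegral.integral_sub intervalIntegrable_const (hint hk)]
    calc _ ≤ ε * |u (k + 1) - u k| := by
          refine intervalIntegral.norm_integral_le_of_norm_le_const fun x hx => ?_
          rw [Set.uIoc_of_le (by rw [hu_succ]; linarith), hu_succ] at hx
          have hxab : x ∈ Set.Icc a b :=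
            ⟨(hu_mem hk.le).1.trans hx.1.le, hx.2.trans (hu_succ k ▸ (hu_mem hk).2)⟩
          refine hε _ (hu_mem hk.le) _ hxab ?_
          rw [Real.dist_eq, abs_sub_comm, abs_of_nonneg (by linarith [hx.1])]
          linarith [hx.2]
      _ = ε * h := by rw [hu_succ, add_sub_cancel_left, abs_of_nonneg hh0]
  have hsplit : ∑ k ∈ range n, ∫ x in u k..u (k + 1), g x = ∫ x in a..b, g x := by
    rw [intervalIntegral.sum_integral_adjacent_intervals (a := u) fun k hk => hint hk, hun]
    simp [u]
  calc _ = ‖∑ k ∈ range n, (h • g (u k) - ∫ x in u k..u (k + 1), g x)‖ := by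
        rw [sum_sub_distrib, hsplit]
    _ ≤ ∑ k ∈ range n, ε * h := norm_sum_le_of_le _ fun k hk => hpiece (mem_range.mp hk)
    _ = ε * (b - a) := by rw [sum_const, card_range, nsmul_eq_mul, hh]; field_simp

theorem tendsto_sum_smul_intervalIntegral (hab : a ≤ b) (hg : ContinuousOn g (Set.Icc a b)) :
    Tendsto (fun n : ℕ => ∑ k ∈ range n, ((b - a) / n) • g (a + k * ((b - a) / n))) atTop
      (𝓝 (∫ x in a..b, g x)) := by
  rw [Metric.tendsto_nhds]
  intro ε hε
  obtain ⟨δ, hδ, hg_unif⟩ := Metric.uniformContinuousOn_iff_le.mp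
    (isCompact_Icc.uniformContinuousOn_of_continuous hg) (ε / (b - a + 1)) (by positivity)
  have hmesh : Tendsto (fun n : ℕ => (b - a) / n) atTop (𝓝 0) :=
    tendsto_const_div_atTop_nhds_zero_nat (b - a)
  filter_upwards [hmesh.eventually (ge_mem_nhds hδ), eventually_gt_atTop 0] with n hnδ hn
  rw [dist_eq_norm]
  calc _ ≤ ε / (b - a + 1) * (b - a) :=
        norm_sum_smul_sub_intervalIntegral_le hab hn hg fun x hx y hy hxy =>
          dist_eq_norm (g x) (g y) ▸ hg_unif x hx y hy (hxy.trans hnδ)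
    _ < ε := by
        rw [div_mul_eq_mul_div, div_lt_iff₀ (by linarith)]
        nlinarith

end RiemannSum

theorem IdentDistrib.of_tendsto_ae {Ω ι E : Type*} [MeasurableSpace Ω] {P : Measure Ω}
    [IsProbabilityMeasure P] [PseudoEMetricSpace E] [MeasurableSpace E] [BorelSpace E]
    {l : Filter ι} [l.NeBot] [l.IsCountablyGenerated] {X Y : ι → Ω → E} {X' Y' : Ω → E}
    (hX : ∀ i, AEMeasurable (X i) P) (hY : ∀ i, AEMeasurable (Y i) P)
    (hXY : ∀ᶠ i in l, IdentDistrib (X i) (Y i) P P)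
    (hX' : ∀ᵐ ω ∂P, Tendsto (fun i => X i ω) l (𝓝 (X' ω)))
    (hY' : ∀ᵐ ω ∂P, Tendsto (fun i => Y i ω) l (𝓝 (Y' ω))) :
    IdentDistrib X' Y' P P := by
  have hX'_meas := aemeasurable_of_tendsto_metrizable_ae l hX hX'
  have hY'_meas := aemeasurable_of_tendsto_metrizable_ae l hY hY'
  have hX_lim := (tendstoInDistribution_of_ae_tendsto hX hX'_meas hX').tendsto
  have hY_lim := (tendstoInDistribution_of_ae_tendsto hY hY'_meas hY').tendsto
  refine ⟨hX'_meas, hY'_meas, ?_⟩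
  have h_lim := tendsto_nhds_unique hX_lim
    (hY_lim.congr' (hXY.mono fun i h => Subtype.ext h.map_eq.symm))
  exact congrArg Subtype.val h_lim

theorem IdentDistrib.comp_perm_of_iIndepFun {Ω ι E : Type*} [MeasurableSpace Ω]
    {P : Measure Ω} [Fintype ι] [MeasurableSpace E] {X : ι → Ω → E}
    (hX : ∀ i, AEMeasurable (X i) P) (hind : iIndepFun X P) {ν : Measure E} (hν : ∀ i, P.map (X i) = ν) (σ : ι ≃ ι) :
    IdentDistrib (fun ω i => X (σ i) ω) (fun ω i => X i ω) P P := by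
  refine ⟨aemeasurable_pi_lambda _ fun i => hX (σ i), aemeasurable_pi_lambda _ hX, ?_⟩
  rw [(hind.precomp σ.injective).map_fun_eq_pi_map fun i => hX (σ i),
    hind.map_fun_eq_pi_map hX]
  simp only [hν]

theorem Fin.partialSum_sub_castSucc {G : Type*} [AddCommGroup G] {n : ℕ}
    (p : Fin (n + 1) → G) :
    Fin.partialSum (fun i => p i.succ - p i.castSucc) = fun k => p k - p 0 := by
  funext k
  rw [eq_sub_iff_add_eq', ← vadd_eq_add, ← Pi.vadd_apply]
  simpa only [neg_add_eq_sub] using congrFun (Fin.partialSum_left_neg p) k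

theorem Fin.partialSum_sub_castSucc_rev {G : Type*} [AddCommGroup G] {n : ℕ}
    (p : Fin (n + 1) → G) :
    Fin.partialSum (fun i => p i.rev.succ - p i.rev.castSucc) =
      fun k => p (Fin.last n) - p k.rev := by
  simpa only [Fin.rev_succ, Fin.rev_castSucc, Fin.rev_zero, neg_sub_neg, neg_add_eq_sub]
    using Fin.partialSum_sub_castSucc fun j => -p j.rev

theorem Fin.measurable_partialSum {n : ℕ} (k : Fin (n + 1)) :
    Measurable fun x : Fin n → ℝ => Fin.partialSum x k := by
  induction k using Fin.inductionOn with
  | zero => simp only [Fin.partialSum_zero, measurable_const]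
  | succ k ih =>
    simp only [Fin.partialSum_succ]
    exact ih.add (measurable_pi_apply k)

theorem IdentDistrib.sub_rev_of_iIndepFun_increments {Ω : Type*} [MeasurableSpace Ω]
    {P : Measure Ω} {n : ℕ} {p : Ω → Fin (n + 1) → ℝ} (hp : ∀ k, Measurable fun ω => p ω k)
    (hind : iIndepFun (fun (i : Fin n) ω => p ω i.succ - p ω i.castSucc) P) {ν : Measure ℝ}
    (hν : ∀ i : Fin n, P.map (fun ω => p ω i.succ - p ω i.castSucc) = ν) :
    IdentDistrib (fun ω k => p ω (Fin.last n) - p ω k.rev) (fun ω k => p ω k - p ω 0)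
      P P := by
  have hS : Measurable fun x : Fin n → ℝ => Fin.partialSum x :=
    measurable_pi_lambda _ Fin.measurable_partialSum
  have := (IdentDistrib.comp_perm_of_iIndepFun (fun i => ((hp _).sub (hp _)).aemeasurable)
    hind hν Fin.revPerm).comp hS
  simpa only [Function.comp_def, Fin.revPerm_apply, Pi.sub_apply, Fin.partialSum_sub_castSucc,
    Fin.partialSum_sub_castSucc_rev] using this

theorem IsStandardBrownianMotion.identDistrib_reverse_grid {Ω : Type} [MeasurableSpace Ω]
    {P : Measure Ω} {B : ℝ → Ω → ℝ} (hB : IsStandardBrownianMotion P B) {t : ℝ} (ht : 0 ≤ t)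
    {n : ℕ} (hn : 0 < n) :
    IdentDistrib (fun ω (k : Fin (n + 1)) => B t ω - B (t - (k : ℕ) * (t / n)) ω)
      (fun ω (k : Fin (n + 1)) => B ((k : ℕ) * (t / n)) ω - B 0 ω) P P := by
  set s : Fin (n + 1) → ℝ := fun k => (k : ℕ) * (t / n)
  have hs_mono : Monotone s := fun i j hij =>
    mul_le_mul_of_nonneg_right (Nat.cast_le.mpr hij) (by positivity)
  have hs_nonneg (k : Fin (n + 1)) : 0 ≤ s k := by positivity
  have hs_last : s (Fin.last n) = t := by
    simp only [s, Fin.val_last]; field_simp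
  have hs_rev (k : Fin (n + 1)) : s k.rev = t - s k := by
    simp only [s, Fin.val_rev]
    rw [Nat.cast_sub (by omega)]
    push_cast; field_simp; ring
  have hs_zero : s 0 = 0 := by simp only [s, Fin.val_zero, Nat.cast_zero, zero_mul]
  have hs_step (i : Fin n) : s i.succ - s i.castSucc = t / n := by
    simp only [s, Fin.val_succ, Fin.val_castSucc]; push_cast; ring
  have := IdentDistrib.sub_rev_of_iIndepFun_increments (p := fun ω k => B (s k) ω)
    (fun k => hB.measurable _) (hB.indepIncrements n s hs_mono hs_nonneg)
    (ν := gaussianReal 0 (t / n).toNNReal) fun i => by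
      rw [hB.gaussianIncrements _ _ (hs_nonneg _) (hs_mono i.castSucc_le_succ), hs_step]
  simp only [hs_last, hs_rev, hs_zero] at this
  exact this

noncomputable def reversedExpFunctional (η t : ℝ) (w : ℝ → ℝ) : ℝ :=
  Real.exp (2 * (η * t + w t)) * ∫ s in (0 : ℝ)..t, Real.exp (-(2 * (η * s + w s)))

noncomputable def reversedExpRiemannSum (η t : ℝ) (n : ℕ) (v : Fin (n + 1) → ℝ) : ℝ :=
  Real.exp (2 * (η * t + v (Fin.last n))) *
    ∑ k : Fin n, (t / n) * Real.exp (-(2 * (η * ((k : ℕ) * (t / n)) + v k.castSucc)))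

theorem integral_exp_eq_reversedExpFunctional (η t : ℝ) {b : ℝ → ℝ} (hb : b 0 = 0) :
    ∫ s in (0 : ℝ)..t, Real.exp (2 * (η * s + b s)) =
      reversedExpFunctional η t fun s => b t - b (t - s) := by
  have h := intervalIntegral.integral_comp_sub_left
    (fun s => Real.exp (2 * (η * s + b s))) (a := 0) (b := t) t
  rw [sub_self, sub_zero] at h
  rw [← h, reversedExpFunctional, ← intervalIntegral.integral_const_mul]
  refine intervalIntegral.integral_congr fun s _ => ?_
  rw [sub_self, hb, ← Real.exp_add]
  congr 1
  ring

theorem measurable_reversedExpRiemannSum (η t : ℝ) (n : ℕ) :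
    Measurable (reversedExpRiemannSum η t n) := by
  unfold reversedExpRiemannSum
  fun_prop

theorem tendsto_reversedExpRiemannSum (η : ℝ) {t : ℝ} (ht : 0 ≤ t) {w : ℝ → ℝ}
    (hw : Continuous w) :
    Tendsto (fun n : ℕ => reversedExpRiemannSum η t n fun k => w ((k : ℕ) * (t / n))) atTop
      (𝓝 (reversedExpFunctional η t w)) := by
  have hsum := tendsto_sum_smul_intervalIntegral (a := 0) ht
    (g := fun s => Real.exp (-(2 * (η * s + w s)))) (by fun_prop : Continuous _).continuousOn
  simp only [sub_zero, zero_add, smul_eq_mul] at hsum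
  refine (hsum.const_mul (Real.exp (2 * (η * t + w t)))).congr' ?_
  filter_upwards [eventually_gt_atTop 0] with n hn
  simp only [reversedExpRiemannSum, Fin.val_last, Fin.val_castSucc]
  rw [Fin.sum_univ_eq_sum_range
    (fun k => t / n * Real.exp (-(2 * (η * (k * (t / n)) + w (k * (t / n)))))) n]
  field_simp

/-- Time-reversal identity: `∫_0^t e^{2(ηs + B_s)} ds` has the same law as
`e^{2(ηt + B_t)} ∫_0^t e^{-2(ηs + B_s)} ds`. -/
theorem time_reversal_identity_in_law
    {Ω : Type} [MeasurableSpace Ω] (P : Measure Ω) (B : ℝ → Ω → ℝ)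
    (hB : IsStandardBrownianMotion P B) (η t : ℝ) (ht : 0 < t) :
    P.map (fun ω => ∫ s in (0:ℝ)..t, Real.exp (2 * (η * s + B s ω))) =
    P.map (fun ω => Real.exp (2 * (η * t + B t ω)) *
      ∫ s in (0:ℝ)..t, Real.exp (-(2 * (η * s + B s ω)))) := by
  have := hB.isProbability
  have hB_meas := hB.measurable
  refine (IdentDistrib.of_tendsto_ae (l := atTop)
    (X := fun n ω => reversedExpRiemannSum η t n fun k => B t ω - B (t - (k : ℕ) * (t / n)) ω)
    (Y := fun n ω => reversedExpRiemannSum η t n fun k => B ((k : ℕ) * (t / n)) ω - B 0 ω)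
    (fun n => ?_) (fun n => ?_) ?_ ?_ ?_).map_eq
  · exact ((measurable_reversedExpRiemannSum η t n).comp (by fun_prop)).aemeasurable
  · exact ((measurable_reversedExpRiemannSum η t n).comp (by fun_prop)).aemeasurable
  · filter_upwards [eventually_gt_atTop 0] with n hn
    exact (hB.identDistrib_reverse_grid ht.le hn).comp (measurable_reversedExpRiemannSum η t n)
  · filter_upwards [hB.cont, hB.start] with ω hcont h0
    rw [integral_exp_eq_reversedExpFunctional η t h0]
    exact tendsto_reversedExpRiemannSum η ht.le (by fun_prop)
  · filter_upwards [hB.cont, hB.start] with ω hcont h0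
    simpa only [h0, sub_zero, reversedExpFunctional] using
      tendsto_reversedExpRiemannSum η ht.le hcont
end
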